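/- arXiv:2511.13560 — 2 statements merged into one kernel-verified Lean document; each statement's English description precedes it below -/
import Mathlib

section
/- With the same hypotheses, the lifting map τ satisfies τ ∘ (multiplication by A) = (multiplication by Ã) ∘ τ as linear maps F₂^{lm} → F₂^{ul·tm}. -/
open Finset

noncomputable section

abbrev BIdx (l m : ℕ) := ZMod l × ZMod m
abbrev CIdx (l m u t : ℕ) := ZMod (u * l) × ZMod (t * m)

/-- The reduction map `π : Z_{ul} × Z_{tm} → Z_l × Z_m`, `(ã, b̃) ↦ (ã mod l, b̃ mod m)`. -/
def red (l m u t : ℕ) : CIdx l m u t → BIdx l m :=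
  fun z => (ZMod.castHom (dvd_mul_left l u) (ZMod l) z.1,
            ZMod.castHom (dvd_mul_left m t) (ZMod m) z.2)

variable (l m u t : ℕ) [NeZero l] [NeZero m] [NeZero u] [NeZero t]

instance : NeZero (u * l) := ⟨Nat.mul_ne_zero (NeZero.ne u) (NeZero.ne l)⟩
instance : NeZero (t * m) := ⟨Nat.mul_ne_zero (NeZero.ne t) (NeZero.ne m)⟩

/-- The lifting map `τ`, the `F₂`-linear map sending the basis monomial `x^a y^b` to the
sum of the basis monomials in its fiber, i.e. `∑_{0≤j<u, 0≤k<t} x^{a+lj} y^{b+mk}`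
(precomposition with the reduction map `red`). -/
def liftMap : (BIdx l m → ZMod 2) →ₗ[ZMod 2] (CIdx l m u t → ZMod 2) :=
  LinearMap.funLeft (ZMod 2) (ZMod 2) (red l m u t)

/-- The projection map `p`, the `F₂`-linear map sending the basis monomial `x^ã y^b̃` to
`x^{ã mod l} y^{b̃ mod m}` (pushforward along the reduction map `red`). -/
def projMap : (CIdx l m u t → ZMod 2) →ₗ[ZMod 2] (BIdx l m → ZMod 2) where
  toFun w := fun b => ∑ x : CIdx l m u t, if red l m u t x = b then w x else 0
  map_add' w w' := by
    funext b
    simp only [Pi.add_apply]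
    rw [← Finset.sum_add_distrib]
    exact Finset.sum_congr rfl fun x _ => by split <;> simp
  map_smul' c w := by
    funext b
    simp only [Pi.smul_apply, RingHom.id_apply, smul_eq_mul]
    rw [Finset.mul_sum]
    exact Finset.sum_congr rfl fun x _ => by split <;> simp

/-- Hamming weight of a vector in `F₂^α`. -/
def wt {α : Type*} [Fintype α] (v : α → ZMod 2) : ℕ :=
  (Finset.univ.filter (fun a => v a ≠ 0)).card

/-- Hamming weight of a vector in a two-block space `F₂^α ⊕ F₂^α`. -/
def pairWt {α : Type*} [Fintype α] (L : (α → ZMod 2) × (α → ZMod 2)) : ℕ :=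
  wt L.1 + wt L.2

/-- Multiplication by the monomial indexed by the group element `α` acting on the group
algebra viewed as the function space `F₂^G`. -/
def shiftMap {G : Type*} [AddGroup G] (α : G) : (G → ZMod 2) →ₗ[ZMod 2] (G → ZMod 2) :=
  LinearMap.funLeft (ZMod 2) (ZMod 2) (fun z => z - α)

/-- The weight-preserving lift `σ` induced by a section `s` of the reduction map:
the `F₂`-linear map sending basis vector `e_{(a,b)}` to `e_{s(a,b)}`. -/
def secMap (s : BIdx l m → CIdx l m u t) :
    (BIdx l m → ZMod 2) →ₗ[ZMod 2] (CIdx l m u t → ZMod 2) where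
  toFun v := fun x => ∑ b : BIdx l m, if s b = x then v b else 0
  map_add' v v' := by
    funext x
    simp only [Pi.add_apply]
    rw [← Finset.sum_add_distrib]
    exact Finset.sum_congr rfl fun b _ => by split <;> simp
  map_smul' c v := by
    funext x
    simp only [Pi.smul_apply, RingHom.id_apply, smul_eq_mul]
    rw [Finset.mul_sum]
    exact Finset.sum_congr rfl fun b _ => by split <;> simp

end

/-- If the monomial `Ã = x^{α̃₁} y^{α̃₂}` reduces to the monomial `A = x^{α₁} y^{α₂}`,
then `τ ∘ (multiplication by A) = (multiplication by Ã) ∘ τ`. -/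
theorem liftMap_comm_mul (l m u t : ℕ) [NeZero l] [NeZero m] [NeZero u] [NeZero t]
    (αt : CIdx l m u t) (α : BIdx l m) (hα : red l m u t αt = α) :
    liftMap l m u t ∘ₗ shiftMap α = shiftMap αt ∘ₗ liftMap l m u t := by
  ext v z
  have : red l m u t (z - αt) = red l m u t z - α := by
    subst hα
    simp [red, Prod.ext_iff, map_sub]
  simp only [liftMap, shiftMap, LinearMap.funLeft, LinearMap.coe_comp, Function.comp_apply, LinearMap.coe_mk, AddHom.coe_mk, this]
end

section
/- If a weight-preserving lift σ• = (σ₂, σ'⊕σ', σ₀) forms a chain map from the base BB complex Q• to the cover complex Q̃• (with each component satisfying p∘σ = id against the corresponding projection), then for any weight-d representative L of a nontrivial class in H₁(Q•), σ₁(L) is a nontrivial logical representative of Q̃• of weight d; hence d_h ≤ d. -/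
open Finset

lemma proj_sec (l m u t : ℕ) [NeZero l] [NeZero m] [NeZero u] [NeZero t]
    (s : BIdx l m → CIdx l m u t) (hs : ∀ b, red l m u t (s b) = b)
    (v : BIdx l m → ZMod 2) : projMap l m u t (secMap l m u t s v) = v := by
  funext b
  have hinj : Function.Injective s := fun a b h => by rw [← hs a, h, hs b]
  show (∑ x : CIdx l m u t, if red l m u t x = b then
      (∑ b' : BIdx l m, if s b' = x then v b' else 0) else 0) = v b
  rw [Finset.sum_eq_single (s b)]
  · rw [if_pos (hs b), Finset.sum_eq_single b (fun c _ hc => if_neg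
      (fun h => hc (hinj h))) (by simp), if_pos rfl]
  · intro x _ hx
    by_cases hr : red l m u t x = b
    · rw [if_pos hr]
      refine Finset.sum_eq_zero fun b' _ => if_neg fun h => hx ?_
      have hb : b' = b := by rw [← hs b', h, hr]
      exact h.symm.trans (congrArg s hb)
    · rw [if_neg hr]
  · simp
lemma wt_sec (l m u t : ℕ) [NeZero l] [NeZero m] [NeZero u] [NeZero t]
    (s : BIdx l m → CIdx l m u t) (hs : ∀ b, red l m u t (s b) = b)
    (v : BIdx l m → ZMod 2) : wt (secMap l m u t s v) = wt v := by
  have hinj : Function.Injective s := fun a b h => by rw [← hs a, h, hs b]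
  have key : ∀ x : CIdx l m u t, secMap l m u t s v x =
      ∑ b' : BIdx l m, if s b' = x then v b' else 0 := fun _ => rfl
  unfold wt
  rw [← Finset.card_image_of_injective (Finset.univ.filter (fun a => v a ≠ 0)) hinj]
  congr 1
  ext x
  simp only [Finset.mem_filter, Finset.mem_image, Finset.mem_univ, true_and]
  constructor
  · intro hx
    have : ∃ b' : BIdx l m, s b' = x := by
      by_contra h
      push_neg at h
      apply hx
      rw [key]
      exact Finset.sum_eq_zero fun b' _ => by simp [h b']
    obtain ⟨b', hb'⟩ := this
    refine ⟨b', ?_, hb'⟩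
    intro hv
    apply hx
    rw [key, Finset.sum_eq_single b' (fun c _ hc => if_neg (fun h =>
      hc (hinj (h.trans hb'.symm)))) (by simp), if_pos hb', hv]
  · rintro ⟨b', hv, rfl⟩
    rw [key, Finset.sum_eq_single b' (fun c _ hc => if_neg (fun h =>
      hc (hinj h))) (by simp), if_pos rfl]
    exact hv

/-- If a weight-preserving lift `σ• = (σ₂, σ'⊕σ', σ₀)` (each component induced by a
section of the reduction map) forms a chain map from the base BB complex to the cover
complex, then any weight-`d` representative `L` of a nontrivial class of the base complex
lifts to a nontrivial logical representative `σ₁(L)` of the cover complex of weight `d`;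
hence `d_h ≤ d`. -/
theorem weight_preserving_lift_distance_bound (l m u t : ℕ)
    [NeZero l] [NeZero m] [NeZero u] [NeZero t]
    (A B : (BIdx l m → ZMod 2) →ₗ[ZMod 2] (BIdx l m → ZMod 2))
    (Ac Bc : (CIdx l m u t → ZMod 2) →ₗ[ZMod 2] (CIdx l m u t → ZMod 2))
    (hAB : A ∘ₗ B = B ∘ₗ A) (hAcBc : Ac ∘ₗ Bc = Bc ∘ₗ Ac)
    (hpA : projMap l m u t ∘ₗ Ac = A ∘ₗ projMap l m u t)
    (hpB : projMap l m u t ∘ₗ Bc = B ∘ₗ projMap l m u t)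
    (s2 s1 s0 : BIdx l m → CIdx l m u t)
    (hs2 : ∀ b, red l m u t (s2 b) = b) (hs1 : ∀ b, red l m u t (s1 b) = b)
    (hs0 : ∀ b, red l m u t (s0 b) = b)
    (hσ2 : ((secMap l m u t s1).prodMap (secMap l m u t s1)) ∘ₗ LinearMap.prod B A =
      LinearMap.prod Bc Ac ∘ₗ secMap l m u t s2)
    (hσ1 : secMap l m u t s0 ∘ₗ LinearMap.coprod A B =
      LinearMap.coprod Ac Bc ∘ₗ ((secMap l m u t s1).prodMap (secMap l m u t s1)))
    (L : (BIdx l m → ZMod 2) × (BIdx l m → ZMod 2)) (d : ℕ)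
    (hL1 : LinearMap.coprod A B L = 0)
    (hL2 : L ∉ LinearMap.range (LinearMap.prod B A))
    (hLd : pairWt L = d) :
    LinearMap.coprod Ac Bc (((secMap l m u t s1).prodMap (secMap l m u t s1)) L) = 0 ∧
    ((secMap l m u t s1).prodMap (secMap l m u t s1)) L ∉
        LinearMap.range (LinearMap.prod Bc Ac) ∧
    pairWt (((secMap l m u t s1).prodMap (secMap l m u t s1)) L) = d := by
  refine ⟨?_, ?_, ?_⟩
  · have := congrArg (fun f => f L) hσ1
    simp only [LinearMap.comp_apply] at this
    rw [← this, hL1, map_zero]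
  · rintro ⟨x, hx⟩
    apply hL2
    refine ⟨projMap l m u t x, ?_⟩
    have hp := congrArg (fun f => f x) hpA
    have hq := congrArg (fun f => f x) hpB
    simp only [LinearMap.comp_apply] at hp hq
    have hL' : (projMap l m u t (((secMap l m u t s1).prodMap (secMap l m u t s1)) L).1,
        projMap l m u t (((secMap l m u t s1).prodMap (secMap l m u t s1)) L).2) = L := by
      simp only [LinearMap.prodMap_apply]
      rw [proj_sec l m u t s1 hs1, proj_sec l m u t s1 hs1]
    rw [← hL']
    rw [← hx]
    simp only [LinearMap.prod_apply, Pi.prod]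
    exact Prod.ext hq.symm hp.symm
  · rw [← hLd]
    simp only [LinearMap.prodMap_apply, pairWt]
    rw [wt_sec l m u t s1 hs1, wt_sec l m u t s1 hs1]
end
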